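/- For every a > 0 and b ∈ ℝ, sup_{u ∈ ℝ} [ log(2·cosh(a·u + b)) − a·u²/2 ] = max_{m ∈ [−1,1]} [ a·m²/2 + b·m − g(m) ], and both sides are finite. -/

import Mathlib

open Real

/-- Minus the binary entropy as a function of the magnetization `m`:
`g(m) = ((1-m)/2) log((1-m)/2) + ((1+m)/2) log((1+m)/2)`
(with the convention `0·log 0 = 0`, automatic since `Real.log 0 = 0`). -/
noncomputable def gEntropy (m : ℝ) : ℝ :=
  ((1 - m) / 2) * Real.log ((1 - m) / 2) + ((1 + m) / 2) * Real.log ((1 + m) / 2)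

open Set

/- `log (2 cosh x) = max_{m ∈ [-1,1]} (m x - g m)`, attained at `m = tanh x`
(two-point Gibbs inequality). Writing `F u = log (2 cosh (a u + b)) - a u² / 2` and
`G m = a m² / 2 + b m - g m`, this gives `G m ≤ F m` for `m ∈ [-1,1]` and
`F u ≤ G (tanh (a u + b))`, the latter because `-a (u - m)² / 2 ≤ 0`. Hence the two suprema
bound each other, and `G` is bounded since `-g ≤ log 2` (the case `x = 0`). -/

theorem bddAbove_range_and_ciSup_eq_of_forall_exists_le {α ι κ : Type*}
    [ConditionallyCompleteLattice α] [Nonempty ι] [Nonempty κ] {f : ι → α} {g : κ → α}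
    (hg : BddAbove (range g)) (hfg : ∀ i, ∃ k, f i ≤ g k) (hgf : ∀ k, ∃ i, g k ≤ f i) :
    BddAbove (range f) ∧ ⨆ i, f i = ⨆ k, g k := by
  obtain ⟨C, hC⟩ := hg
  have hf : BddAbove (range f) := ⟨C, by
    rintro _ ⟨i, rfl⟩
    obtain ⟨k, hk⟩ := hfg i
    exact hk.trans (hC ⟨k, rfl⟩)⟩
  refine ⟨hf, le_antisymm (ciSup_le fun i => ?_) (ciSup_le fun k => ?_)⟩
  · obtain ⟨k, hk⟩ := hfg i
    exact le_ciSup_of_le ⟨C, hC⟩ k hk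
  · obtain ⟨i, hi⟩ := hgf k
    exact le_ciSup_of_le hf i hi

theorem mul_log_le_mul_log_add_sub {r p : ℝ} (hr : 0 ≤ r) (hp : 0 < p) :
    r * log p ≤ r * log r + (p - r) := by
  rcases hr.eq_or_lt with rfl | hr
  · simpa using hp.le
  have h := mul_le_mul_of_nonneg_left (log_le_sub_one_of_pos (div_pos hp hr)) hr.le
  rw [log_div hp.ne' hr.ne', mul_sub_one, mul_div_cancel₀ p hr.ne'] at h
  linarith

noncomputable def spinUpProb (x : ℝ) : ℝ := exp x / (2 * cosh x)

theorem spinUpProb_pos (x : ℝ) : 0 < spinUpProb x := by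
  unfold spinUpProb; positivity

theorem spinUpProb_add_spinUpProb_neg (x : ℝ) : spinUpProb x + spinUpProb (-x) = 1 := by
  rw [spinUpProb, spinUpProb, cosh_neg, ← add_div, div_eq_one_iff_eq (by positivity), cosh_eq]
  ring

theorem log_spinUpProb (x : ℝ) : log (spinUpProb x) = x - log (2 * cosh x) := by
  rw [spinUpProb, log_div (exp_ne_zero x) (by positivity), log_exp]

theorem one_add_tanh_div_two (x : ℝ) : (1 + tanh x) / 2 = spinUpProb x := by
  have hc := cosh_pos x
  rw [spinUpProb, tanh_eq_sinh_div_cosh, ← cosh_add_sinh]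
  field_simp

theorem one_sub_tanh_div_two (x : ℝ) : (1 - tanh x) / 2 = spinUpProb (-x) := by
  rw [← one_add_tanh_div_two, tanh_neg, sub_eq_add_neg]

theorem mul_sub_gEntropy_le_log_two_mul_cosh (x : ℝ) {m : ℝ} (hm : m ∈ Icc (-1) 1) :
    m * x - gEntropy m ≤ log (2 * cosh x) := by
  have hup := mul_log_le_mul_log_add_sub (r := (1 + m) / 2) (by linarith [hm.1]) (spinUpProb_pos x)
  have hdown := mul_log_le_mul_log_add_sub (r := (1 - m) / 2) (by linarith [hm.2])
    (spinUpProb_pos (-x))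
  rw [log_spinUpProb] at hup hdown
  rw [cosh_neg] at hdown
  unfold gEntropy
  linear_combination hup + hdown + spinUpProb_add_spinUpProb_neg x

theorem tanh_mul_sub_gEntropy_tanh (x : ℝ) :
    tanh x * x - gEntropy (tanh x) = log (2 * cosh x) := by
  have htanh : tanh x = spinUpProb x - spinUpProb (-x) := by
    linear_combination one_add_tanh_div_two x - one_sub_tanh_div_two x
  unfold gEntropy
  rw [one_add_tanh_div_two, one_sub_tanh_div_two, log_spinUpProb, log_spinUpProb, cosh_neg, htanh]
  linear_combination log (2 * cosh x) * spinUpProb_add_spinUpProb_neg x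

theorem tanh_mem_Icc (x : ℝ) : tanh x ∈ Icc (-1) 1 :=
  ⟨(neg_one_lt_tanh x).le, (tanh_lt_one x).le⟩

/-- `gaussianLandau` and `entropyLandau` are minus the Landau functionals `L₁` and `L₂`. -/
noncomputable def gaussianLandau (a b u : ℝ) : ℝ := log (2 * cosh (a * u + b)) - a * u ^ 2 / 2

noncomputable def entropyLandau (a b m : ℝ) : ℝ := a * m ^ 2 / 2 + b * m - gEntropy m

theorem entropyLandau_le_gaussianLandau (a b : ℝ) {m : ℝ} (hm : m ∈ Icc (-1) 1) :
    entropyLandau a b m ≤ gaussianLandau a b m := by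
  unfold entropyLandau gaussianLandau
  linear_combination mul_sub_gEntropy_le_log_two_mul_cosh (a * m + b) hm

theorem gaussianLandau_le_entropyLandau_tanh {a : ℝ} (ha : 0 ≤ a) (b u : ℝ) :
    gaussianLandau a b u ≤ entropyLandau a b (tanh (a * u + b)) := by
  unfold entropyLandau gaussianLandau
  rw [← tanh_mul_sub_gEntropy_tanh]
  have hsq := mul_nonneg ha (sq_nonneg (u - tanh (a * u + b)))
  linear_combination hsq / 2

theorem entropyLandau_le (a b : ℝ) {m : ℝ} (hm : m ∈ Icc (-1) 1) :
    entropyLandau a b m ≤ |a| / 2 + |b| + log 2 := by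
  have hg := mul_sub_gEntropy_le_log_two_mul_cosh 0 hm
  rw [mul_zero, zero_sub, cosh_zero, mul_one] at hg
  have hm2 : m ^ 2 ≤ 1 := by nlinarith [hm.1, hm.2]
  have ha : a * m ^ 2 ≤ |a| := by nlinarith [le_abs_self a, neg_abs_le a, sq_nonneg m]
  have hb : b * m ≤ |b| := calc
    b * m ≤ |b| * |m| := by rw [← abs_mul]; exact le_abs_self _
    _ ≤ |b| := mul_le_of_le_one_right (abs_nonneg b) (abs_le.mpr hm)
  unfold entropyLandau
  linarith

theorem gaussian_vs_entropy_variational_formulas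
    (a b : ℝ) (ha : 0 < a) :
    BddAbove (Set.range fun u : ℝ =>
      Real.log (2 * Real.cosh (a * u + b)) - a * u ^ 2 / 2) ∧
    BddAbove (Set.range fun m : Set.Icc (-1 : ℝ) 1 =>
      a * (m : ℝ) ^ 2 / 2 + b * (m : ℝ) - gEntropy m) ∧
    (⨆ u : ℝ, (Real.log (2 * Real.cosh (a * u + b)) - a * u ^ 2 / 2)) =
      ⨆ m : Set.Icc (-1 : ℝ) 1, (a * (m : ℝ) ^ 2 / 2 + b * (m : ℝ) - gEntropy m) := by
  have : Nonempty (Icc (-1 : ℝ) 1) := ⟨⟨0, by norm_num, by norm_num⟩⟩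
  have hbddEntropy : BddAbove (range fun m : Icc (-1 : ℝ) 1 => entropyLandau a b m) :=
    ⟨|a| / 2 + |b| + log 2, by rintro _ ⟨m, rfl⟩; exact entropyLandau_le a b m.2⟩
  obtain ⟨hbddGaussian, hsup⟩ := bddAbove_range_and_ciSup_eq_of_forall_exists_le hbddEntropy
    (fun u => ⟨⟨_, tanh_mem_Icc (a * u + b)⟩, gaussianLandau_le_entropyLandau_tanh ha.le b u⟩)
    (fun m => ⟨m, entropyLandau_le_gaussianLandau a b m.2⟩)
  exact ⟨hbddGaussian, hbddEntropy, hsup⟩
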